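/- Let (X,σ) be a subshift and L ∈ ℕ. Suppose X = X₀ ⊃ X₁ ⊃ ⋯ ⊃ X_k is a descending chain of nonempty subshifts where for each 0 ≤ i < k there is a word w_i ∈ L(X_i) with |w_i| ≤ L such that X_{i+1} = X_i(w_i), and suppose that for each i the cylinder set [w_i]₀⁺ ∩ X_i contains at least one aperiodic point. Then k < P_X(2L−1)/L. -/

import Mathlib

open Filter Topology Pointwise

section Defs

variable {A : Type*}

/-- The left shift on bi-infinite sequences over `A`. -/
def shift (x : ℤ → A) : ℤ → A := fun i => x (i + 1)

/-- The word `w` occurs in `x` at position `j`. -/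
def OccursAt {n : ℕ} (x : ℤ → A) (w : Fin n → A) (j : ℤ) : Prop :=
  ∀ i : Fin n, x (j + (i : ℤ)) = w i

/-- The word `w` belongs to the language of `X`. -/
def InLanguage (X : Set (ℤ → A)) {n : ℕ} (w : Fin n → A) : Prop :=
  ∃ x ∈ X, OccursAt x w 0

/-- The complexity function of `X`: the number of words of length `n` in the language. -/
noncomputable def complexity (X : Set (ℤ → A)) (n : ℕ) : ℕ :=
  {w : Fin n → A | InLanguage X w}.ncard

/-- `x` is aperiodic: no positive shift fixes it. -/
def IsAperiodic (x : ℤ → A) : Prop := ∀ p : ℤ, 0 < p → (fun i => x (i + p)) ≠ x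

/-- The subshift obtained from `X` by forbidding the word `w`. -/
def Forbid (X : Set (ℤ → A)) {n : ℕ} (w : Fin n → A) : Set (ℤ → A) :=
  {x ∈ X | ∀ j : ℤ, ¬ OccursAt x w j}

/-- `w` extends uniquely `L` times to the right and left in the language of `X`. -/
def ExtendsUniquely (X : Set (ℤ → A)) {n : ℕ} (w : Fin n → A) (L : ℕ) : Prop :=
  ∃! u : Fin (n + 2 * L) → A,
    InLanguage X u ∧ ∀ i : Fin n, u ⟨L + (i : ℕ), by have := i.isLt; omega⟩ = w i

variable [TopologicalSpace A]

/-- The automorphism group of a subshift `X`: permutations of `X` which are homeomorphisms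
and commute with the shift. -/
def Aut (X : Set (ℤ → A)) : Subgroup (Equiv.Perm ↥X) where
  carrier := {φ | Continuous ⇑φ ∧ Continuous ⇑φ.symm ∧
    (∀ x y : ↥X, shift (x : ℤ → A) = (y : ℤ → A) →
      shift ((φ x : ℤ → A)) = ((φ y : ℤ → A))) ∧
    (∀ x y : ↥X, shift (x : ℤ → A) = (y : ℤ → A) →
      shift ((φ.symm x : ℤ → A)) = ((φ.symm y : ℤ → A)))}
  one_mem' := ⟨continuous_id, continuous_id, fun _ _ h => h, fun _ _ h => h⟩
  mul_mem' := by
    rintro a b ⟨hac, hac', haσ, haσ'⟩ ⟨hbc, hbc', hbσ, hbσ'⟩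
    refine ⟨?_, ?_, ?_, ?_⟩
    · simpa using hac.comp hbc
    · simpa [Equiv.Perm.mul_def] using hbc'.comp hac'
    · intro x y h
      simpa using haσ _ _ (hbσ x y h)
    · intro x y h
      simpa [Equiv.Perm.mul_def] using hbσ' _ _ (haσ' x y h)
  inv_mem' := by
    rintro a ⟨hac, hac', haσ, haσ'⟩
    exact ⟨hac', by first | exact hac | simpa [Equiv.Perm.inv_def] using hac, fun x y h => haσ' x y h,
      fun x y h => by first | exact haσ x y h | simpa [Equiv.Perm.inv_def] using haσ x y h⟩

/-- `f` is a block code of range `R` representing `φ`. -/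
def IsBlockCode (X : Set (ℤ → A)) (R : ℕ) (φ : Equiv.Perm ↥X)
    (f : (Fin (2 * R + 1) → A) → A) : Prop :=
  ∀ (x : ↥X) (i : ℤ), (φ x : ℤ → A) i = f (fun j => (x : ℤ → A) (i + (j : ℤ) - R))

/-- `Aut_R(X)`: automorphisms such that both they and their inverses are given by
sliding block codes of range `R`. -/
def AutR (X : Set (ℤ → A)) (R : ℕ) : Set (Equiv.Perm ↥X) :=
  {φ | φ ∈ Aut X ∧ (∃ f, IsBlockCode X R φ f) ∧ (∃ g, IsBlockCode X R φ⁻¹ g)}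

end Defs

/-- Apply a block code of range `R` to a word, shortening it by `2R`. -/
def applyCode {A : Type*} {R n : ℕ} (f : (Fin (2 * R + 1) → A) → A) (w : Fin n → A) :
    Fin (n - 2 * R) → A :=
  fun i => f (fun j => w ⟨(i : ℕ) + (j : ℕ), by have := i.isLt; have := j.isLt; omega⟩)

section Defs2

variable {A : Type*} [TopologicalSpace A]

/-- `φ` preserves occurrences of `v`. -/
def PreservesOcc (X : Set (ℤ → A)) (φ : Equiv.Perm ↥X) {n : ℕ} (v : Fin n → A) : Prop :=
  ∀ x : ↥X, OccursAt (x : ℤ → A) v 0 → OccursAt ((φ x : ℤ → A)) v 0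

/-- `φ` preserves occurrences of `v` which are at least `D` units away from any occurrence of
the words `u 0, …, u (i-1)`. -/
def PreservesOccAway (X : Set (ℤ → A)) (φ : Equiv.Perm ↥X) {n : ℕ} (v : Fin n → A)
    (D : ℕ) (ml : ℕ → ℕ) (u : ∀ t, Fin (ml t) → A) (i : ℕ) : Prop :=
  ∀ x : ↥X, OccursAt (x : ℤ → A) v 0 →
    (∀ t < i, ∀ p : ℤ, -(D : ℤ) ≤ p → p + ml t ≤ n + D → ¬ OccursAt (x : ℤ → A) (u t) p) →
    OccursAt ((φ x : ℤ → A)) v 0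

end Defs2

/-- A countable discrete group is amenable if it admits a Følner sequence. -/
def FolnerAmenable (G : Type*) [Group G] : Prop :=
  ∃ F : ℕ → Set G, (∀ k, (F k).Finite) ∧
    (∀ g : G, ∀ᶠ k in atTop, g ∈ F k) ∧
    ∀ g : G, Tendsto (fun k => ((symmDiff (g • F k) (F k)).ncard : ℝ) / ((F k).ncard : ℝ))
      atTop (𝓝 0)

/-!
Forbidding a word `w` removes from the language at least `n + 1 - |w|` words of length `n`: the
windows of length `n` of an aperiodic point `x` that contain an occurrence of `w`. Were there fewer
of them, then by pigeonhole each occurrence of `w` in `x` would have another one within distance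
`n - |w|` on either side, so every window of length `n` of `x` would contain `w` and `x` would have
at most `n` words of length `n`, contradicting the Morse–Hedlund theorem. For `n = 2L - 1` each step
of the chain therefore loses at least `L` words, while `X_k` still has one.
-/

theorem Int.exists_mem_Icc_of_forall_exists_add_sub_mem {S : Set ℤ} {g o₀ : ℤ} (h₀ : o₀ ∈ S)
    (h : ∀ o ∈ S, ∃ p, 0 < p ∧ p ≤ g ∧ o + p ∈ S ∧ o - p ∈ S) (j : ℤ) :
    ∃ o ∈ S, o ∈ Set.Icc j (j + g) := by
  induction j using Int.inductionOn' (b := o₀) with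
  | zero =>
    obtain ⟨p, hp, hpg, -⟩ := h o₀ h₀
    exact ⟨o₀, h₀, le_rfl, by omega⟩
  | succ j _ ih =>
    obtain ⟨o, ho, hjo, hog⟩ := ih
    rcases hjo.lt_or_eq with hlt | rfl
    · exact ⟨o, ho, hlt, by omega⟩
    · obtain ⟨p, hp, hpg, hup, -⟩ := h j ho
      exact ⟨j + p, hup, by omega, by omega⟩
  | pred j _ ih =>
    obtain ⟨o, ho, hjo, hog⟩ := ih
    rcases hog.lt_or_eq with hlt | rfl
    · exact ⟨o, ho, by omega, by omega⟩
    · obtain ⟨p, hp, hpg, -, hdown⟩ := h _ ho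
      exact ⟨j + g - p, hdown, by omega, by omega⟩

section Subshift

variable {A : Type*}

def window (x : ℤ → A) (n : ℕ) (j : ℤ) : Fin n → A := fun i => x (j + i)

theorem occursAt_window (x : ℤ → A) (n : ℕ) (j : ℤ) : OccursAt x (window x n j) j :=
  fun _ => rfl

theorem init_window (x : ℤ → A) (n : ℕ) (j : ℤ) :
    Fin.init (window x (n + 1) j) = window x n j :=
  rfl

theorem tail_window (x : ℤ → A) (n : ℕ) (j : ℤ) :
    Fin.tail (window x (n + 1) j) = window x n (j + 1) := by
  funext i
  simp only [Fin.tail, window, Fin.val_succ]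
  congr 1
  push_cast
  ring

theorem image_init_range_window (x : ℤ → A) (n : ℕ) :
    Fin.init '' Set.range (window x (n + 1)) = Set.range (window x n) := by
  rw [← Set.range_comp]
  rfl

theorem image_tail_range_window (x : ℤ → A) (n : ℕ) :
    Fin.tail '' Set.range (window x (n + 1)) = Set.range (window x n) := by
  rw [← Set.range_comp]
  ext u
  constructor
  · rintro ⟨j, rfl⟩
    exact ⟨j + 1, (tail_window x n j).symm⟩
  · rintro ⟨j, rfl⟩
    exact ⟨j - 1, by simp [tail_window]⟩

section MorseHedlund

variable [Finite A] {x : ℤ → A}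

theorem ncard_range_window_le_succ (x : ℤ → A) (n : ℕ) :
    (Set.range (window x n)).ncard ≤ (Set.range (window x (n + 1))).ncard := by
  rw [← image_init_range_window]
  exact Set.ncard_image_le

/-- Equal counts make `Fin.init` and `Fin.tail` injective on the windows of length `ℓ + 1`, so each
such window determines its neighbours on both sides, and a repeated window recurs periodically. -/
theorem exists_periodic_of_ncard_range_window_eq {ℓ : ℕ}
    (h : (Set.range (window x ℓ)).ncard = (Set.range (window x (ℓ + 1))).ncard) :
    ∃ p : ℤ, 0 < p ∧ Function.Periodic x p := by
  have hinit : Set.InjOn Fin.init (Set.range (window x (ℓ + 1))) :=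
    Set.injOn_of_ncard_image_eq (by rw [image_init_range_window, h])
  have htail : Set.InjOn Fin.tail (Set.range (window x (ℓ + 1))) :=
    Set.injOn_of_ncard_image_eq (by rw [image_tail_range_window, h])
  obtain ⟨a, b, hab, heq⟩ :=
    (Set.toFinite (Set.range (window x (ℓ + 1)))).exists_lt_map_eq_of_forall_mem
      (f := window x (ℓ + 1)) Set.mem_range_self
  have hshift : ∀ d : ℤ, window x (ℓ + 1) (a + d) = window x (ℓ + 1) (b + d) := by
    intro d
    induction d using Int.induction_on with
    | zero => simpa using heq
    | succ d ih =>
      refine hinit (Set.mem_range_self _) (Set.mem_range_self _) ?_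
      simpa only [init_window, tail_window, add_assoc] using congrArg Fin.tail ih
    | pred d ih =>
      refine htail (Set.mem_range_self _) (Set.mem_range_self _) ?_
      simpa only [tail_window, init_window, ← add_sub_assoc, sub_add_cancel] using
        congrArg Fin.init ih
  refine ⟨b - a, sub_pos.mpr hab, fun t => ?_⟩
  have := congrFun (hshift (t - a)) 0
  simp only [window, Fin.val_zero, Nat.cast_zero, add_zero] at this
  rw [show b + (t - a) = t + (b - a) by ring, add_sub_cancel] at this
  exact this.symm

/-- The Morse–Hedlund theorem. -/
theorem IsAperiodic.lt_ncard_range_window (hx : IsAperiodic x) (n : ℕ) :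
    n < (Set.range (window x n)).ncard := by
  induction n with
  | zero => exact (Set.ncard_pos).mpr (Set.range_nonempty _)
  | succ n ih =>
    have hne : (Set.range (window x n)).ncard ≠ (Set.range (window x (n + 1))).ncard := by
      rintro h
      obtain ⟨p, hp, hper⟩ := exists_periodic_of_ncard_range_window_eq h
      exact hx p hp (funext hper)
    have := ncard_range_window_le_succ x n
    omega

end MorseHedlund

def ContainsWord {m n : ℕ} (u : Fin n → A) (w : Fin m → A) : Prop :=
  ∃ r : ℕ, ∃ _ : r + m ≤ n, ∀ t : Fin m, u ⟨r + t, by omega⟩ = w t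

theorem OccursAt.exists_occursAt_of_containsWord {x : ℤ → A} {m n : ℕ} {u : Fin n → A}
    {w : Fin m → A} {j : ℤ} (hu : OccursAt x u j) (hw : ContainsWord u w) :
    ∃ r : ℕ, OccursAt x w (j + r) := by
  obtain ⟨r, hr, hrw⟩ := hw
  refine ⟨r, fun t => ?_⟩
  rw [← hrw t, ← hu ⟨r + t, by omega⟩]
  push_cast
  ring_nf

theorem containsWord_window {x : ℤ → A} {m n : ℕ} {w : Fin m → A} {j : ℤ} {r : ℕ}
    (hw : OccursAt x w (j + r)) (hr : r + m ≤ n) : ContainsWord (window x n j) w :=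
  ⟨r, hr, fun t => by rw [← hw t]; simp only [window]; push_cast; ring_nf⟩

theorem OccursAt.of_window_eq {x : ℤ → A} {m n : ℕ} {w : Fin m → A} {j j' : ℤ} {r : ℕ}
    (hw : OccursAt x w (j + r)) (hr : r + m ≤ n) (h : window x n j = window x n j') :
    OccursAt x w (j' + r) := by
  intro t
  have := congrFun h ⟨r + t, by omega⟩
  simp only [window] at this
  push_cast at this
  rw [← hw t, add_assoc, add_assoc, this]

def windowsContaining (x : ℤ → A) {m : ℕ} (w : Fin m → A) (n : ℕ) : Set (Fin n → A) :=
  {u ∈ Set.range (window x n) | ContainsWord u w}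

theorem OccursAt.add_sub_of_window_eq {x : ℤ → A} {m n : ℕ} {w : Fin m → A} {o : ℤ} {a b : ℕ}
    (hw : OccursAt x w o) (ha : a + m ≤ n) (hb : b + m ≤ n)
    (h : window x n (o - a) = window x n (o - b)) :
    OccursAt x w (o + (b - a)) ∧ OccursAt x w (o - (b - a)) := by
  have hw' : ∀ c : ℕ, OccursAt x w (o - c + c) := fun c => by rwa [sub_add_cancel]
  constructor
  · have := (hw' b).of_window_eq hb h.symm
    rwa [show o - a + b = o + (b - a) by ring] at this
  · have := (hw' a).of_window_eq ha h
    rwa [show o - b + a = o - (b - a) by ring] at this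

theorem IsAperiodic.add_one_sub_le_ncard_windowsContaining [Finite A] {x : ℤ → A}
    (hx : IsAperiodic x) {m : ℕ} {w : Fin m → A} {j : ℤ} (hw : OccursAt x w j) (n : ℕ) :
    n + 1 - m ≤ (windowsContaining x w n).ncard := by
  by_contra! hG
  have hgap : ∀ o ∈ {o | OccursAt x w o}, ∃ p : ℤ, 0 < p ∧ p ≤ (n - m : ℕ) ∧
      OccursAt x w (o + p) ∧ OccursAt x w (o - p) := by
    intro o ho
    obtain ⟨a, ha, b, hb, hab, heq⟩ := Set.exists_ne_map_eq_of_ncard_lt_of_maps_to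
      (s := (Finset.range (n - m + 1) : Set ℕ)) (t := windowsContaining x w n)
      (f := fun s : ℕ => window x n (o - s))
      (by rw [Set.ncard_coe_finset, Finset.card_range]; omega)
      (fun s hs => ⟨⟨o - s, rfl⟩, containsWord_window (r := s) (by rwa [sub_add_cancel])
        (by simp only [Finset.coe_range, Set.mem_Iio] at hs; omega)⟩)
    simp only [Finset.coe_range, Set.mem_Iio] at ha hb
    rcases hab.lt_or_gt with hlt | hlt
    · exact ⟨b - a, by omega, by omega, ho.add_sub_of_window_eq (by omega) (by omega) heq⟩
    · exact ⟨a - b, by omega, by omega, ho.add_sub_of_window_eq (by omega) (by omega) heq.symm⟩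
  have hcover :=
    Int.exists_mem_Icc_of_forall_exists_add_sub_mem (S := {o | OccursAt x w o}) hw hgap
  have hall : Set.range (window x n) ⊆ windowsContaining x w n := by
    rintro _ ⟨i, rfl⟩
    obtain ⟨o, ho, hio, hog⟩ := hcover i
    refine ⟨⟨i, rfl⟩, containsWord_window (r := (o - i).toNat) ?_ (by omega)⟩
    rwa [Int.toNat_of_nonneg (by omega), add_sub_cancel]
  have := hx.lt_ncard_range_window n
  have := Set.ncard_le_ncard hall
  omega

theorem translate_mem_of_shift_image_eq {X : Set (ℤ → A)} (hX : shift '' X = X) {x : ℤ → A}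
    (hx : x ∈ X) (j : ℤ) : (fun i => x (i + j)) ∈ X := by
  induction j using Int.induction_on with
  | zero => simpa using hx
  | succ j ih =>
    rw [← hX]
    exact ⟨_, ih, funext fun i => by simp only [shift]; ring_nf⟩
  | pred j ih =>
    rw [← hX] at ih
    obtain ⟨y, hy, hyx⟩ := ih
    convert hy using 1
    funext i
    have := congrFun hyx (i - 1)
    simp only [shift, sub_add_cancel] at this
    rw [this]
    ring_nf

theorem inLanguage_window {X : Set (ℤ → A)} (hX : shift '' X = X) {x : ℤ → A} (hx : x ∈ X)
    (n : ℕ) (j : ℤ) : InLanguage X (window x n j) :=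
  ⟨_, translate_mem_of_shift_image_eq hX hx j, fun i => by simp only [window]; ring_nf⟩

theorem InLanguage.mono {X Y : Set (ℤ → A)} (hXY : X ⊆ Y) {n : ℕ} {u : Fin n → A}
    (hu : InLanguage X u) : InLanguage Y u :=
  let ⟨x, hx, hxu⟩ := hu
  ⟨x, hXY hx, hxu⟩

theorem not_inLanguage_forbid {X : Set (ℤ → A)} {m n : ℕ} {w : Fin m → A} {u : Fin n → A}
    (hu : ContainsWord u w) : ¬ InLanguage (Forbid X w) u := by
  rintro ⟨x, ⟨-, hforbid⟩, hxu⟩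
  obtain ⟨r, hr⟩ := hxu.exists_occursAt_of_containsWord hu
  exact hforbid _ hr

theorem complexity_pos {X : Set (ℤ → A)} [Finite A] (hX : X.Nonempty) (n : ℕ) :
    0 < complexity X n :=
  let ⟨x, hx⟩ := hX
  (Set.ncard_pos).mpr ⟨window x n 0, x, hx, occursAt_window x n 0⟩

theorem complexity_forbid_add_le [Finite A] {X : Set (ℤ → A)} (hX : shift '' X = X)
    {x : ℤ → A} (hxX : x ∈ X) (hx : IsAperiodic x) {m : ℕ} {w : Fin m → A} {j : ℤ}
    (hw : OccursAt x w j) (n : ℕ) :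
    complexity (Forbid X w) n + (n + 1 - m) ≤ complexity X n := by
  have hdisj : Disjoint {u : Fin n → A | InLanguage (Forbid X w) u} (windowsContaining x w n) :=
    Set.disjoint_right.mpr fun u hu => not_inLanguage_forbid hu.2
  have hsub : {u | InLanguage (Forbid X w) u} ∪ windowsContaining x w n ⊆
      {u : Fin n → A | InLanguage X u} := by
    rintro u (hu | ⟨⟨i, rfl⟩, -⟩)
    · exact InLanguage.mono (Set.sep_subset _ _) hu
    · exact inLanguage_window hX hxX n i
  calc complexity (Forbid X w) n + (n + 1 - m)
      ≤ complexity (Forbid X w) n + (windowsContaining x w n).ncard :=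
        Nat.add_le_add_left (hx.add_one_sub_le_ncard_windowsContaining hw n) _
    _ = ({u | InLanguage (Forbid X w) u} ∪ windowsContaining x w n).ncard :=
        (Set.ncard_union_eq hdisj).symm
    _ ≤ complexity X n := Set.ncard_le_ncard hsub

end Subshift

theorem chain_length_lt_general {A : Type*} [Fintype A]
    (L : ℕ) (hL : 0 < L) (k : ℕ) (X : ℕ → Set (ℤ → A))
    (hX_inv : ∀ i ≤ k, shift '' X i = X i)
    (hX_ne : ∀ i ≤ k, (X i).Nonempty)
    (m : ℕ → ℕ) (w : ∀ i, Fin (m i) → A)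
    (hlen : ∀ i < k, m i ≤ L)
    (hstep : ∀ i < k, X (i + 1) = Forbid (X i) (w i))
    (hap : ∀ i < k, ∃ x ∈ X i, OccursAt x (w i) 0 ∧ IsAperiodic x) :
    (k : ℝ) < (complexity (X 0) (2 * L - 1) : ℝ) / (L : ℝ) := by
  have hdrop :
      ∀ i < k, complexity (X (i + 1)) (2 * L - 1) + L ≤ complexity (X i) (2 * L - 1) := by
    intro i hi
    obtain ⟨x, hxX, hw, hx⟩ := hap i hi
    have := complexity_forbid_add_le (hX_inv i hi.le) hxX hx hw (2 * L - 1)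
    rw [hstep i hi]
    have := hlen i hi
    omega
  have hchain :
      ∀ i ≤ k, i * L + complexity (X i) (2 * L - 1) ≤ complexity (X 0) (2 * L - 1) := by
    intro i hi
    induction i with
    | zero => simp
    | succ i ih =>
      have := hdrop i hi
      have := ih (by omega)
      rw [add_mul, one_mul]
      omega
  have := hchain k le_rfl
  have := complexity_pos (hX_ne k le_rfl) (2 * L - 1)
  rw [lt_div_iff₀ (by exact_mod_cast hL)]
  exact_mod_cast (by omega : k * L < complexity (X 0) (2 * L - 1))

/-- **Lemma 3.2.** Let `(X, σ)` be a subshift and `L ∈ ℕ`.  If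
`X = X₀ ⊃ X₁ ⊃ ⋯ ⊃ X_k` is a descending chain of nonempty subshifts with
`X_{i+1} = X_i(w_i)` for some word `w_i ∈ L(X_i)` with `|w_i| ≤ L`, and each cylinder
`[w_i]₀⁺ ∩ X_i` contains an aperiodic point, then `k < P_X(2L−1)/L`. -/
theorem chain_length_lt {A : Type*} [Fintype A] [TopologicalSpace A] [DiscreteTopology A]
    (L : ℕ) (hL : 0 < L) (k : ℕ) (X : ℕ → Set (ℤ → A))
    (hX_cl : ∀ i ≤ k, IsClosed (X i)) (hX_inv : ∀ i ≤ k, shift '' X i = X i)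
    (hX_ne : ∀ i ≤ k, (X i).Nonempty)
    (m : ℕ → ℕ) (w : ∀ i, Fin (m i) → A)
    (hlen : ∀ i < k, m i ≤ L)
    (hlang : ∀ i < k, InLanguage (X i) (w i))
    (hstep : ∀ i < k, X (i + 1) = Forbid (X i) (w i))
    (hap : ∀ i < k, ∃ x ∈ X i, OccursAt x (w i) 0 ∧ IsAperiodic x) :
    (k : ℝ) < (complexity (X 0) (2 * L - 1) : ℝ) / (L : ℝ) :=
  chain_length_lt_general L hL k X hX_inv hX_ne m w hlen hstep hap
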